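/- Let F be the antidirected path on four vertices v_1, v_2, v_3, v_4 with arcs v_1→v_2, v_3→v_2 and v_3→v_4. Then for every n > 1, exo(n, F) = 2n − 3. -/
import Mathlib


/-- An oriented graph `G` contains a copy of the oriented graph `F`. -/
def Copies {α β : Type*} (F : α → α → Prop) (G : β → β → Prop) : Prop :=
  ∃ f : α → β, Function.Injective f ∧ ∀ a b, F a b → G (f a) (f b)

/-- The oriented Turán number. -/
noncomputable def exo {α : Type*} (n : ℕ) (F : α → α → Prop) : ℕ :=
  sSup {m : ℕ | ∃ G : Fin n → Fin n → Prop,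
    (∀ v, ¬ G v v) ∧ (∀ u v, G u v → ¬ G v u) ∧
    ¬ Copies F G ∧ {p : Fin n × Fin n | G p.1 p.2}.ncard = m}

/-- The antidirected path on four vertices with arcs `v₁→v₂, v₃→v₂, v₃→v₄`. -/
def antiP4 (i j : Fin 4) : Prop :=
  (i = 0 ∧ j = 1) ∨ (i = 2 ∧ j = 1) ∨ (i = 2 ∧ j = 3)

open Finset

section Aux

variable {n : ℕ}

/-- Counting arcs by their tail. -/
lemma card_filter_fst (R : Fin n → Fin n → Prop) [DecidableRel R] :
    (univ.filter fun p : Fin n × Fin n => R p.1 p.2).card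
      = ∑ c : Fin n, (univ.filter fun b => R c b).card := by
  rw [Finset.card_eq_sum_card_fiberwise (f := Prod.fst) (t := univ)
    (fun x _ => mem_univ x.1)]
  refine Finset.sum_congr rfl fun c _ => ?_
  refine Finset.card_bij (fun p _ => p.2) (fun p hp => ?_) (fun p hp q hq h => ?_)
      (fun b hb => ?_)
  · simp only [mem_filter, mem_univ, true_and] at hp ⊢
    rw [← hp.2]; exact hp.1
  · simp only [mem_filter, mem_univ, true_and] at hp hq
    exact Prod.ext (hp.2.trans hq.2.symm) h
  · simp only [mem_filter, mem_univ, true_and] at hb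
    exact ⟨(c, b), by simp [hb], rfl⟩

/-- Counting arcs by their head. -/
lemma card_filter_snd (R : Fin n → Fin n → Prop) [DecidableRel R] :
    (univ.filter fun p : Fin n × Fin n => R p.1 p.2).card
      = ∑ c : Fin n, (univ.filter fun a => R a c).card := by
  rw [Finset.card_eq_sum_card_fiberwise (f := Prod.snd) (t := univ)
    (fun x _ => mem_univ x.2)]
  refine Finset.sum_congr rfl fun c _ => ?_
  refine Finset.card_bij (fun p _ => p.1) (fun p hp => ?_) (fun p hp q hq h => ?_)
      (fun b hb => ?_)
  · simp only [mem_filter, mem_univ, true_and] at hp ⊢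
    rw [← hp.2]; exact hp.1
  · simp only [mem_filter, mem_univ, true_and] at hp hq
    exact Prod.ext h (hp.2.trans hq.2.symm)
  · simp only [mem_filter, mem_univ, true_and] at hb
    exact ⟨(b, c), by simp [hb], rfl⟩

/-- Build a copy of `antiP4` from the pattern `a→b, c→b, c→d` with suitable distinctness. -/
lemma copies_of_pattern {G : Fin n → Fin n → Prop} (hirr : ∀ v, ¬ G v v)
    {a b c d : Fin n} (hab : G a b) (hcb : G c b) (hcd : G c d)
    (hac : a ≠ c) (had : a ≠ d) (hbd : b ≠ d) : Copies antiP4 G := by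
  have h1 : a ≠ b := fun h => hirr b (h ▸ hab)
  have h2 : c ≠ b := fun h => hirr b (h ▸ hcb)
  have h3 : c ≠ d := fun h => hirr d (h ▸ hcd)
  refine ⟨![a, b, c, d], ?_, ?_⟩
  · intro i j hij
    fin_cases i <;> fin_cases j <;>
      simp_all [Matrix.cons_val_zero, Matrix.cons_val_one]
  · intro i j hF
    rcases hF with ⟨hi, hj⟩ | ⟨hi, hj⟩ | ⟨hi, hj⟩ <;> subst hi <;> subst hj <;> simpa

/-- Rule R: if `a→b`, `c→b` with `a ≠ c`, then every out-neighbour of `c` is `b` or `a`. -/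
lemma ruleR {G : Fin n → Fin n → Prop} (hirr : ∀ v, ¬ G v v)
    (hfree : ¬ Copies antiP4 G) {a b c : Fin n} (hab : G a b) (hcb : G c b)
    (hac : a ≠ c) {d : Fin n} (hcd : G c d) : d = b ∨ d = a := by
  by_contra h
  push_neg at h
  exact hfree (copies_of_pattern hirr hab hcb hcd hac (Ne.symm h.2) (Ne.symm h.1))

/-- Key: a vertex cannot have two distinct in-neighbours of out-degree ≥ 2. -/
lemma key_lemma {G : Fin n → Fin n → Prop} [DecidableRel G] (hirr : ∀ v, ¬ G v v)
    (hasym : ∀ u v, G u v → ¬ G v u) (hfree : ¬ Copies antiP4 G)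
    {b c e : Fin n} (hcb : G c b) (heb : G e b) (hce : c ≠ e)
    (hc2 : 2 ≤ (univ.filter fun x => G c x).card)
    (he2 : 2 ≤ (univ.filter fun x => G e x).card) : False := by
  have main : ∀ x y : Fin n, G x b → G y b → x ≠ y →
      2 ≤ (univ.filter fun z => G x z).card → G x y := by
    intro x y hxb hyb hxy h2
    by_contra hxy'
    have hsub : (univ.filter fun z => G x z) ⊆ {b} := by
      intro d hd
      have hGxd : G x d := (mem_filter.mp hd).2
      rcases ruleR hirr hfree hyb hxb (Ne.symm hxy) hGxd with rfl | rfl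
      · exact mem_singleton_self _
      · exact absurd hGxd hxy'
    have := Finset.card_le_card hsub
    simp at this
    omega
  exact hasym c e (main c e hcb heb hce hc2) (main e c heb hcb hce.symm he2)

/-- Upper bound: an `antiP4`-free oriented graph on `n` vertices has at most `2n-3` arcs. -/
lemma upper_bound (G : Fin n → Fin n → Prop) [DecidableRel G]
    (hirr : ∀ v, ¬ G v v) (hasym : ∀ u v, G u v → ¬ G v u)
    (hfree : ¬ Copies antiP4 G) :
    (univ.filter fun p : Fin n × Fin n => G p.1 p.2).card ≤ 2 * n - 3 := by
  set E := univ.filter fun p : Fin n × Fin n => G p.1 p.2 with hE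
  -- trivial bound 2|E| ≤ n(n-1), used for n ≤ 3
  have hdouble : 2 * E.card ≤ n * (n - 1) := by
    have h1 : E.card = ∑ c : Fin n, (univ.filter fun x => G c x).card :=
      card_filter_fst G
    have h2 : E.card = ∑ c : Fin n, (univ.filter fun x => G x c).card :=
      card_filter_snd G
    have h3 : ∀ c : Fin n,
        (univ.filter fun x => G c x).card + (univ.filter fun x => G x c).card ≤ n - 1 := by
      intro c
      have hdisj : Disjoint (univ.filter fun x => G c x) (univ.filter fun x => G x c) := by
        rw [Finset.disjoint_left]
        intro x hx hx'
        exact hasym c x (mem_filter.mp hx).2 (mem_filter.mp hx').2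
      have hsub : (univ.filter fun x => G c x) ∪ (univ.filter fun x => G x c)
          ⊆ univ.erase c := by
        intro x hx
        rcases mem_union.mp hx with h | h
        · exact mem_erase.mpr ⟨fun h' => hirr c (h' ▸ (mem_filter.mp h).2), mem_univ _⟩
        · exact mem_erase.mpr ⟨fun h' => hirr c (h' ▸ (mem_filter.mp h).2), mem_univ _⟩
      have := Finset.card_le_card hsub
      rw [Finset.card_union_of_disjoint hdisj] at this
      simpa using this
    calc 2 * E.card = ∑ c : Fin n, (univ.filter fun x => G c x).card
          + ∑ c : Fin n, (univ.filter fun x => G x c).card := by rw [← h1, ← h2]; ring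
      _ = ∑ c : Fin n, ((univ.filter fun x => G c x).card
          + (univ.filter fun x => G x c).card) := (Finset.sum_add_distrib).symm
      _ ≤ ∑ _c : Fin n, (n - 1) := Finset.sum_le_sum (fun c _ => h3 c)
      _ = n * (n - 1) := by simp [Finset.sum_const, mul_comm]
  rcases Nat.lt_or_ge n 4 with hn4 | hn4
  · interval_cases n <;> omega
  -- now n ≥ 4
  have hsum : E.card = ∑ c : Fin n, (univ.filter fun x => G c x).card := card_filter_fst G
  set S2 := univ.filter fun c : Fin n => 2 ≤ (univ.filter fun x => G c x).card with hS2
  have hsplit : ∑ c ∈ S2, (univ.filter fun x => G c x).card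
      + ∑ c ∈ univ.filter (fun c : Fin n => ¬ 2 ≤ (univ.filter fun x => G c x).card),
          (univ.filter fun x => G c x).card
      = ∑ c : Fin n, (univ.filter fun x => G c x).card :=
    Finset.sum_filter_add_sum_filter_not univ _ _
  have hcards : S2.card + (univ.filter
      (fun c : Fin n => ¬ 2 ≤ (univ.filter fun x => G c x).card)).card = n := by
    have := Finset.card_filter_add_card_filter_not
      (s := (univ : Finset (Fin n)))
      (p := fun c : Fin n => 2 ≤ (univ.filter fun x => G c x).card)
    simpa using this
  have hS1bound : ∑ c ∈ univ.filter
      (fun c : Fin n => ¬ 2 ≤ (univ.filter fun x => G c x).card),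
      (univ.filter fun x => G c x).card ≤ n - S2.card := by
    have h1 : ∀ c ∈ univ.filter
        (fun c : Fin n => ¬ 2 ≤ (univ.filter fun x => G c x).card),
        (univ.filter fun x => G c x).card ≤ 1 := by
      intro c hc
      have := (mem_filter.mp hc).2
      omega
    calc _ ≤ ∑ _c ∈ univ.filter
          (fun c : Fin n => ¬ 2 ≤ (univ.filter fun x => G c x).card), 1 :=
        Finset.sum_le_sum h1
      _ = (univ.filter
          (fun c : Fin n => ¬ 2 ≤ (univ.filter fun x => G c x).card)).card := by simp
      _ ≤ n - S2.card := by omega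
  have hdisj : ∀ c ∈ S2, ∀ e ∈ S2, c ≠ e →
      Disjoint (univ.filter fun x => G c x) (univ.filter fun x => G e x) := by
    intro c hc e he hce
    rw [Finset.disjoint_left]
    intro b hb hb'
    exact key_lemma hirr hasym hfree (mem_filter.mp hb).2 (mem_filter.mp hb').2 hce
      (mem_filter.mp hc).2 (mem_filter.mp he).2
  have hbi : ∑ c ∈ S2, (univ.filter fun x => G c x).card
      = (S2.biUnion fun c => univ.filter fun x => G c x).card :=
    (Finset.card_biUnion hdisj).symm
  set H := S2.biUnion fun c => univ.filter fun x => G c x with hH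
  have hHn : H.card ≤ n := by
    calc H.card ≤ (univ : Finset (Fin n)).card := Finset.card_le_card (subset_univ _)
      _ = n := by simp
  have hEsum : E.card = H.card + ∑ c ∈ univ.filter
      (fun c : Fin n => ¬ 2 ≤ (univ.filter fun x => G c x).card),
      (univ.filter fun x => G c x).card := by
    rw [hsum, ← hsplit, hbi]
  have hS2n : S2.card ≤ n := by
    calc S2.card ≤ (univ : Finset (Fin n)).card := Finset.card_le_card (subset_univ _)
      _ = n := by simp
  obtain h0 | h1 | h2 | h3 : S2.card = 0 ∨ S2.card = 1 ∨ S2.card = 2 ∨ 3 ≤ S2.card := by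
    omega
  · -- S2 empty : H empty
    have : H = ∅ := by
      rw [hH, Finset.card_eq_zero.mp h0]; simp
    rw [hEsum, this]
    simp only [Finset.card_empty, Nat.zero_add]
    omega
  · -- S2 = {c}
    obtain ⟨c, hc⟩ := Finset.card_eq_one.mp h1
    have hcS2 : c ∈ S2 := by rw [hc]; exact mem_singleton_self c
    have hc2 : 2 ≤ (univ.filter fun x => G c x).card := (mem_filter.mp hcS2).2
    have hHc : H = univ.filter fun x => G c x := by
      rw [hH, hc, Finset.singleton_biUnion]
    have houtsub : (univ.filter fun x => G c x) ⊆ univ.erase c := by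
      intro x hx
      exact mem_erase.mpr ⟨fun h' => hirr c (h' ▸ (mem_filter.mp hx).2), mem_univ _⟩
    have houtcard : (univ.filter fun x => G c x).card ≤ n - 1 := by
      have := Finset.card_le_card houtsub
      simpa using this
    rcases Nat.lt_or_ge (univ.filter fun x => G c x).card (n - 1) with hk | hk
    · -- out-degree ≤ n - 2
      rw [hEsum, hHc]
      omega
    · -- out-degree = n - 1 : G c b for all b ≠ c, and then no other arcs
      have houteq : (univ.filter fun x => G c x) = univ.erase c := by
        apply Finset.eq_of_subset_of_card_le houtsub
        have : (univ.erase c).card = n - 1 := by simp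
        omega
      have hall : ∀ b : Fin n, b ≠ c → G c b := by
        intro b hb
        have : b ∈ univ.erase c := mem_erase.mpr ⟨hb, mem_univ _⟩
        rw [← houteq] at this
        exact (mem_filter.mp this).2
      have hzero : ∑ x ∈ univ.filter
          (fun x : Fin n => ¬ 2 ≤ (univ.filter fun z => G x z).card),
          (univ.filter fun z => G x z).card = 0 := by
        apply Finset.sum_eq_zero
        intro v hv
        have hv2 : ¬ 2 ≤ (univ.filter fun z => G v z).card := (mem_filter.mp hv).2
        have hvc : v ≠ c := by
          intro h; rw [h] at hv2; exact hv2 hc2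
        rw [Finset.card_eq_zero]
        rw [Finset.filter_eq_empty_iff]
        intro w _
        intro hvw
        by_cases hwc : w = c
        · rw [hwc] at hvw
          exact hasym c v (hall v hvc) hvw
        · have hcw : G c w := hall w hwc
          have hrule : ∀ d : Fin n, G c d → d = w ∨ d = v :=
            fun d hd => ruleR hirr hfree hvw hcw hvc hd
          have hsub2 : univ.erase c ⊆ ({w, v} : Finset (Fin n)) := by
            intro d hd
            have hGcd : G c d := by
              rw [← houteq] at hd
              exact (mem_filter.mp hd).2
            rcases hrule d hGcd with rfl | rfl
            · exact mem_insert_self _ _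
            · exact mem_insert_of_mem (mem_singleton_self _)
          have hle := Finset.card_le_card hsub2
          have h2' : ({w, v} : Finset (Fin n)).card ≤ 2 := Finset.card_insert_le _ _
          have herase : (univ.erase c).card = n - 1 := by simp
          omega
      rw [hEsum, hzero, hHc]
      omega
  · -- S2 = {c, e}
    obtain ⟨c, e, hce, hS2eq⟩ := Finset.card_eq_two.mp h2
    have hHce : H = (univ.filter fun x => G c x) ∪ (univ.filter fun x => G e x) := by
      rw [hH, hS2eq]
      rw [Finset.biUnion_insert, Finset.singleton_biUnion]
    -- one of c, e is not in H
    have hwit : ∃ w : Fin n, w ∉ H := by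
      by_cases hGec : G e c
      · refine ⟨e, ?_⟩
        rw [hHce]
        intro hmem
        rcases mem_union.mp hmem with h | h
        · exact hasym e c hGec (mem_filter.mp h).2
        · exact hirr e (mem_filter.mp h).2
      · refine ⟨c, ?_⟩
        rw [hHce]
        intro hmem
        rcases mem_union.mp hmem with h | h
        · exact hirr c (mem_filter.mp h).2
        · exact hGec (mem_filter.mp h).2
    obtain ⟨w, hw⟩ := hwit
    have hHsub : H ⊆ univ.erase w := by
      intro x hx
      exact mem_erase.mpr ⟨fun h' => hw (h' ▸ hx), mem_univ _⟩
    have hHcard : H.card ≤ n - 1 := by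
      have := Finset.card_le_card hHsub
      simpa using this
    rw [hEsum]
    omega
  · -- |S2| ≥ 3
    rw [hEsum]
    omega

/-- The extremal construction. -/
def Gex (n : ℕ) : Fin n → Fin n → Prop := fun u v =>
  (2 ≤ u.val ∧ v.val = 0) ∨ (u.val = 0 ∧ v.val = 1) ∨ (u.val = 1 ∧ 2 ≤ v.val)

instance (n : ℕ) : DecidableRel (Gex n) := fun u v => by
  unfold Gex; infer_instance

lemma Gex_irrefl (n : ℕ) : ∀ v : Fin n, ¬ Gex n v v := by
  intro v h
  unfold Gex at h
  omega

lemma Gex_asymm (n : ℕ) : ∀ u v : Fin n, Gex n u v → ¬ Gex n v u := by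
  intro u v h h'
  unfold Gex at h h'
  omega

lemma Gex_free (n : ℕ) : ¬ Copies antiP4 (Gex n) := by
  rintro ⟨f, hinj, harc⟩
  have h1 : Gex n (f 0) (f 1) := harc 0 1 (Or.inl ⟨rfl, rfl⟩)
  have h2 : Gex n (f 2) (f 1) := harc 2 1 (Or.inr (Or.inl ⟨rfl, rfl⟩))
  have h3 : Gex n (f 2) (f 3) := harc 2 3 (Or.inr (Or.inr ⟨rfl, rfl⟩))
  have hac : (f 0).val ≠ (f 2).val := by
    intro h
    have : f 0 = f 2 := Fin.ext h
    have := hinj this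
    simp at this
  have hbd : (f 1).val ≠ (f 3).val := by
    intro h
    have : f 1 = f 3 := Fin.ext h
    have := hinj this
    simp at this
  unfold Gex at h1 h2 h3
  omega

lemma Gex_card (n : ℕ) (hn : 1 < n) :
    (univ.filter fun p : Fin n × Fin n => Gex n p.1 p.2).card = 2 * n - 3 := by
  rw [card_filter_fst (Gex n)]
  have hone : ((⟨1, by omega⟩ : Fin n) : Fin n) ∈ (univ : Finset (Fin n)) := mem_univ _
  rw [← Finset.add_sum_erase _ _ hone]
  have hd1 : (univ.filter fun x : Fin n => Gex n ⟨1, by omega⟩ x).card = n - 2 := by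
    have hfe : (univ.filter fun x : Fin n => Gex n ⟨1, by omega⟩ x)
        = univ.filter fun x : Fin n => 2 ≤ x.val := by
      ext x
      simp only [mem_filter, mem_univ, true_and]
      unfold Gex
      simp only [Fin.val_mk, true_and]
      omega
    rw [hfe]
    have hsum := Finset.card_filter_add_card_filter_not
      (s := (univ : Finset (Fin n))) (p := fun x : Fin n => 2 ≤ x.val)
    have hlow : (univ.filter fun x : Fin n => ¬ 2 ≤ x.val)
        = ({⟨0, by omega⟩, ⟨1, by omega⟩} : Finset (Fin n)) := by
      ext x
      simp only [mem_filter, mem_univ, true_and, mem_insert, mem_singleton, Fin.ext_iff]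
      omega
    have hlowcard : (univ.filter fun x : Fin n => ¬ 2 ≤ x.val).card = 2 := by
      rw [hlow]
      rw [Finset.card_insert_of_notMem, Finset.card_singleton]
      simp only [mem_singleton, Fin.ext_iff]
      omega
    have huniv : (univ : Finset (Fin n)).card = n := by simp
    omega
  have hd2 : ∀ u ∈ univ.erase (⟨1, by omega⟩ : Fin n),
      (univ.filter fun x : Fin n => Gex n u x).card = 1 := by
    intro u hu
    have hu1 : u.val ≠ 1 := by
      have := (mem_erase.mp hu).1
      simp only [ne_eq, Fin.ext_iff] at this
      exact this
    rcases Nat.lt_or_ge u.val 2 with hlt | hge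
    · -- u.val = 0, out-neighbours = {1}
      have hu0 : u.val = 0 := by omega
      have : (univ.filter fun x : Fin n => Gex n u x)
          = ({⟨1, by omega⟩} : Finset (Fin n)) := by
        ext x
        simp only [mem_filter, mem_univ, true_and, mem_singleton, Fin.ext_iff]
        unfold Gex
        omega
      rw [this, Finset.card_singleton]
    · -- u.val ≥ 2, out-neighbours = {0}
      have : (univ.filter fun x : Fin n => Gex n u x)
          = ({⟨0, by omega⟩} : Finset (Fin n)) := by
        ext x
        simp only [mem_filter, mem_univ, true_and, mem_singleton, Fin.ext_iff]
        unfold Gex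
        omega
      rw [this, Finset.card_singleton]
  have herasesum : ∑ u ∈ univ.erase (⟨1, by omega⟩ : Fin n),
      (univ.filter fun x : Fin n => Gex n u x).card = n - 1 := by
    rw [Finset.sum_congr rfl hd2]
    simp only [Finset.sum_const, smul_eq_mul, mul_one]
    rw [Finset.card_erase_of_mem (mem_univ _)]
    simp
  rw [hd1, herasesum]
  omega

end Aux

/-- for every `n > 1`, `exo(n, F) = 2n - 3`. -/
theorem stmt_11 (n : ℕ) (hn : 1 < n) : exo n antiP4 = 2 * n - 3 := by
  classical
  have hgreat : IsGreatest {m : ℕ | ∃ G : Fin n → Fin n → Prop,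
      (∀ v, ¬ G v v) ∧ (∀ u v, G u v → ¬ G v u) ∧
      ¬ Copies antiP4 G ∧ {p : Fin n × Fin n | G p.1 p.2}.ncard = m} (2 * n - 3) := by
    constructor
    · refine ⟨Gex n, Gex_irrefl n, Gex_asymm n, Gex_free n, ?_⟩
      have hset : {p : Fin n × Fin n | Gex n p.1 p.2}
          = ↑(univ.filter fun p : Fin n × Fin n => Gex n p.1 p.2) := by
        ext p; simp
      rw [hset, Set.ncard_coe_finset, Gex_card n hn]
    · rintro m ⟨G, hirr, hasym, hfree, hcard⟩
      haveI : DecidableRel G := fun a b => Classical.propDecidable _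
      have hset : {p : Fin n × Fin n | G p.1 p.2}
          = ↑(univ.filter fun p : Fin n × Fin n => G p.1 p.2) := by
        ext p; simp
      rw [hset, Set.ncard_coe_finset] at hcard
      rw [← hcard]
      exact upper_bound G hirr hasym hfree
  exact hgreat.csSup_eq
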